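/- For real numbers $a$ (representing $\sigma_{s,n}$), $b$ (representing $d\cdot n_w - g_0$) and any $\gamma > 0$, the three conditions $b \le 0$, $a \le 0$, and $a b = 0$ hold simultaneously if and only if $a = -\gamma \max\{0, b - a/\gamma\}$. -/

import Mathlib

/-!
Since `γ > 0`, the right-hand side reads `a = min 0 (a - γ b) = a - max a (γ b)`, i.e.
`max a (γ b) = 0`. The equation `max x y = 0` is the classical min-type NCP reformulation of
the complementarity conditions `x ≤ 0`, `y ≤ 0`, `x y = 0`, and scaling by `γ > 0` changes
neither the sign of `b` nor whether `a b` vanishes.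
-/

theorem max_eq_zero_iff_complementarity {α : Type*} [MulZeroClass α] [LinearOrder α]
    [NoZeroDivisors α] {x y : α} :
    max x y = 0 ↔ x ≤ 0 ∧ y ≤ 0 ∧ x * y = 0 := by
  rw [max_eq_iff, mul_eq_zero]
  constructor
  · rintro (⟨rfl, hy⟩ | ⟨rfl, hx⟩)
    exacts [⟨le_rfl, hy, .inl rfl⟩, ⟨hx, le_rfl, .inr rfl⟩]
  · rintro ⟨hx, hy, rfl | rfl⟩
    exacts [.inl ⟨rfl, hy⟩, .inr ⟨rfl, hx⟩]

theorem neg_mul_max_zero_sub_div {α : Type*} [Field α] [LinearOrder α] [IsStrictOrderedRing α]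
    {γ : α} (hγ : 0 < γ) (a b : α) :
    -γ * max 0 (b - a / γ) = a - max a (γ * b) := by
  have hscale : γ * max 0 (b - a / γ) = max 0 (γ * b - a) := by
    rw [mul_max_of_nonneg _ _ hγ.le, mul_zero, mul_sub, mul_div_cancel₀ _ hγ.ne']
  rw [neg_mul, hscale, ← sub_self a, max_sub_sub_right, neg_sub]

theorem signorini_chouly_hild (a b γ : ℝ) (hγ : 0 < γ) :
    (b ≤ 0 ∧ a ≤ 0 ∧ a * b = 0) ↔ a = -γ * max 0 (b - a / γ) := by
  have hsign : γ * b ≤ 0 ↔ b ≤ 0 := by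
    simpa only [mul_zero] using mul_le_mul_iff_of_pos_left (b := b) (c := 0) hγ
  have hprod : γ * b * a = 0 ↔ a * b = 0 := by
    rw [mul_assoc, mul_eq_zero, or_iff_right hγ.ne', mul_comm]
  rw [neg_mul_max_zero_sub_div hγ, iff_comm, eq_comm, sub_eq_self, max_comm,
    max_eq_zero_iff_complementarity, hsign, hprod]
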